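/- arXiv:1911.10604 — 4 statements merged into one kernel-verified Lean document; each statement's English description precedes it below -/
import Mathlib

section
/- Absolute-value inequality for quadratic forms (inequality (ineq.2) in the proof of Lemma 6): let M ∈ ℝ^{n×p} satisfy Σ_{j=1}^p M_{ij} M_{kj} ≥ 0 for all pairs i ≠ k. Then for every x ∈ ℝ^n, Σ_{j=1}^p (Σ_{i=1}^n x_i M_{ij})² ≤ Σ_{j=1}^p (Σ_{i=1}^n |x_i| M_{ij})², i.e. ‖M^T x‖₂ ≤ ‖M^T |x|‖₂ where |x| is the entrywise absolute value of x. -/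
/-!
Expanding the square, `Σ_j (Σ_i y_i M_{ij})² = Σ_{i,k} y_i y_k ⟨M_i, M_k⟩`. Replacing `y` by `|y|`
leaves the diagonal terms unchanged and can only increase the off-diagonal ones, because
`y_i y_k ≤ |y_i| |y_k|` and `⟨M_i, M_k⟩ ≥ 0` for `i ≠ k`.
-/

open Finset

theorem sum_sq_sum_mul_eq_sum_sum_mul_inner {ι κ R : Type*} [Fintype ι] [Fintype κ]
    [CommSemiring R] (M : Matrix ι κ R) (y : ι → R) :
    ∑ j, (∑ i, y i * M i j) ^ 2 = ∑ i, ∑ k, y i * y k * ∑ j, M i j * M k j := by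
  simp_rw [sq, sum_mul_sum, mul_sum]
  rw [sum_comm]
  refine sum_congr rfl fun i _ => ?_
  rw [sum_comm]
  refine sum_congr rfl fun k _ => sum_congr rfl fun j _ => by ring

theorem sum_sum_mul_le_sum_sum_abs_mul {ι : Type*} [Fintype ι] (G : ι → ι → ℝ)
    (hG : ∀ i k, i ≠ k → 0 ≤ G i k) (x : ι → ℝ) :
    ∑ i, ∑ k, x i * x k * G i k ≤ ∑ i, ∑ k, |x i| * |x k| * G i k := by
  refine sum_le_sum fun i _ => sum_le_sum fun k _ => ?_
  rcases eq_or_ne i k with rfl | hik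
  · rw [abs_mul_abs_self]
  · rw [← abs_mul]
    exact mul_le_mul_of_nonneg_right (le_abs_self _) (hG i k hik)

/-- if the rows of `M ∈ ℝ^{n×p}` have pairwise nonnegative inner products,
then for every `x ∈ ℝⁿ`, `Σ_j (Σ_i x_i M_{ij})² ≤ Σ_j (Σ_i |x_i| M_{ij})²`,
i.e. `‖Mᵀx‖₂ ≤ ‖Mᵀ|x|‖₂`. -/
theorem sq_proj_le_sq_proj_abs {n p : ℕ} (M : Matrix (Fin n) (Fin p) ℝ)
    (h : ∀ i k, i ≠ k → 0 ≤ ∑ j, M i j * M k j) (x : Fin n → ℝ) :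
    ∑ j, (∑ i, x i * M i j) ^ 2 ≤ ∑ j, (∑ i, |x i| * M i j) ^ 2 := by
  rw [sum_sq_sum_mul_eq_sum_sum_mul_inner, sum_sq_sum_mul_eq_sum_sum_mul_inner]
  exact sum_sum_mul_le_sum_sum_abs_mul _ h x
end

section
/- Nonnegative first left singular vector (Lemma 6, reformulated): let Θ ∈ ℝ^{n×p} have nondecreasing rows and let Θ' = Θ(I − p⁻¹ee^T) be the row-centered matrix. Then sup{‖Θ'^T x‖₂ : x ∈ ℝ^n, ‖x‖₂ = 1} = sup{‖Θ'^T x‖₂ : x ∈ ℝ^n, ‖x‖₂ = 1, x_i ≥ 0 for all i}; in particular there exists a unit vector u ∈ ℝ^n with nonnegative entries attaining the maximum of x ↦ ‖Θ'^T x‖₂ over the unit sphere. -/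
/-!
Expanding `‖Θ'ᵀx‖² = ∑ᵢ ∑ₖ xᵢ xₖ ⟨θ'ᵢ, θ'ₖ⟩`, every Gram entry `⟨θ'ᵢ, θ'ₖ⟩` of the centered rows is a
covariance of two nondecreasing sequences, hence nonnegative by Chebyshev's sum inequality.
So replacing a maximizer `v` on the (compact) unit sphere by `|v|` does not decrease the
objective, and `|v|` is a nonnegative maximizer.
-/

/-- The row-centered matrix `Θ' = Θ(I − p⁻¹eeᵀ)`, i.e. `θ'_{ij} = θ_{ij} − p⁻¹ Σ_l θ_{il}`. -/
noncomputable def rowCenter {n p : ℕ} (Θ : Fin n → Fin p → ℝ) : Fin n → Fin p → ℝ :=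
  fun i j => Θ i j - (∑ l, Θ i l) / (p : ℝ)

open Finset

theorem Monovary.sum_sub_average_mul_sub_average_nonneg {ι : Type*} [Fintype ι] {f g : ι → ℝ}
    (hfg : Monovary f g) :
    0 ≤ ∑ i, (f i - (∑ j, f j) / Fintype.card ι) * (g i - (∑ j, g j) / Fintype.card ι) := by
  rcases isEmpty_or_nonempty ι with hι | hι
  · simp
  have hcard : (0 : ℝ) < Fintype.card ι := by exact_mod_cast Fintype.card_pos
  have hexpand : ∑ i, (f i - (∑ j, f j) / Fintype.card ι) * (g i - (∑ j, g j) / Fintype.card ι)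
      = ∑ i, f i * g i - (∑ i, f i) * (∑ i, g i) / Fintype.card ι := by
    simp only [sub_mul, mul_sub, sum_sub_distrib, ← sum_mul, ← mul_sum, sum_const, card_univ,
      nsmul_eq_mul]
    field_simp
    ring
  rw [hexpand, sub_nonneg, div_le_iff₀ hcard]
  linarith [hfg.sum_mul_sum_le_card_mul_sum]

theorem sum_rowCenter_mul_rowCenter_nonneg {n p : ℕ} (Θ : Fin n → Fin p → ℝ)
    (hrows : ∀ i, Monotone (Θ i)) (i k : Fin n) :
    0 ≤ ∑ j, rowCenter Θ i j * rowCenter Θ k j := by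
  simpa [rowCenter] using ((hrows i).monovary (hrows k)).sum_sub_average_mul_sub_average_nonneg

theorem sum_sq_sum_mul_eq_sum_sum_mul_gram {ι κ : Type*} [Fintype ι] [Fintype κ]
    (C : ι → κ → ℝ) (x : ι → ℝ) :
    ∑ j, (∑ i, x i * C i j) ^ 2 = ∑ i, ∑ k, x i * x k * ∑ j, C i j * C k j := by
  simp_rw [sq, sum_mul_sum, mul_sum]
  rw [sum_comm]
  refine sum_congr rfl fun i _ => ?_
  rw [sum_comm]
  exact sum_congr rfl fun k _ => sum_congr rfl fun j _ => by ring

theorem sum_sq_sum_mul_le_sum_sq_sum_abs_mul {ι κ : Type*} [Fintype ι] [Fintype κ]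
    (C : ι → κ → ℝ) (hC : ∀ i k, 0 ≤ ∑ j, C i j * C k j) (x : ι → ℝ) :
    ∑ j, (∑ i, x i * C i j) ^ 2 ≤ ∑ j, (∑ i, |x i| * C i j) ^ 2 := by
  rw [sum_sq_sum_mul_eq_sum_sum_mul_gram, sum_sq_sum_mul_eq_sum_sum_mul_gram]
  refine sum_le_sum fun i _ => sum_le_sum fun k _ => mul_le_mul_of_nonneg_right ?_ (hC i k)
  rw [← abs_mul]
  exact le_abs_self _

theorem isCompact_setOf_sum_sq_eq_one {ι : Type*} [Fintype ι] :
    IsCompact {x : ι → ℝ | ∑ i, x i ^ 2 = 1} := by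
  have hsphere := isCompact_sphere (0 : EuclideanSpace ℝ ι) 1
  rw [← (EuclideanSpace.equiv ι ℝ).symm.toHomeomorph.isCompact_preimage] at hsphere
  convert hsphere using 1
  ext x
  simp [EuclideanSpace.norm_eq]

theorem exists_forall_le_of_sum_sq_eq_one {ι : Type*} [Fintype ι] [Nonempty ι]
    {F : (ι → ℝ) → ℝ} (hF : Continuous F) :
    ∃ v : ι → ℝ, ∑ i, v i ^ 2 = 1 ∧ ∀ x : ι → ℝ, ∑ i, x i ^ 2 = 1 → F x ≤ F v := by
  classical
  have hne : {x : ι → ℝ | ∑ i, x i ^ 2 = 1}.Nonempty :=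
    ⟨Pi.single (Classical.arbitrary ι) 1, by simp [sq, Pi.single_apply]⟩
  obtain ⟨v, hv, hvmax⟩ := isCompact_setOf_sum_sq_eq_one.exists_isMaxOn hne hF.continuousOn
  exact ⟨v, hv, fun x hx => hvmax hx⟩

theorem exists_nonneg_first_left_singular_vector_general {n p : ℕ} (hn : 0 < n)
    (Θ : Fin n → Fin p → ℝ) (hrows : ∀ i, Monotone (Θ i)) :
    (sSup {r : ℝ | ∃ x : Fin n → ℝ, ∑ i, x i ^ 2 = 1 ∧
        r = Real.sqrt (∑ j, (∑ i, x i * rowCenter Θ i j) ^ 2)} =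
      sSup {r : ℝ | ∃ x : Fin n → ℝ, (∑ i, x i ^ 2 = 1) ∧ (∀ i, 0 ≤ x i) ∧
        r = Real.sqrt (∑ j, (∑ i, x i * rowCenter Θ i j) ^ 2)}) ∧
    ∃ u : Fin n → ℝ, (∑ i, u i ^ 2 = 1) ∧ (∀ i, 0 ≤ u i) ∧
      ∀ x : Fin n → ℝ, ∑ i, x i ^ 2 = 1 →
        Real.sqrt (∑ j, (∑ i, x i * rowCenter Θ i j) ^ 2) ≤
          Real.sqrt (∑ j, (∑ i, u i * rowCenter Θ i j) ^ 2) := by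
  have : Nonempty (Fin n) := Fin.pos_iff_nonempty.mp hn
  obtain ⟨v, hv, hvmax⟩ := exists_forall_le_of_sum_sq_eq_one
    (F := fun x : Fin n → ℝ => ∑ j, (∑ i, x i * rowCenter Θ i j) ^ 2) (by fun_prop)
  have hu : ∑ i, |v i| ^ 2 = 1 := by simpa only [sq_abs] using hv
  have humax : ∀ x : Fin n → ℝ, ∑ i, x i ^ 2 = 1 →
      √(∑ j, (∑ i, x i * rowCenter Θ i j) ^ 2) ≤ √(∑ j, (∑ i, |v i| * rowCenter Θ i j) ^ 2) :=
    fun x hx => Real.sqrt_le_sqrt <| (hvmax x hx).trans <|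
      sum_sq_sum_mul_le_sum_sq_sum_abs_mul _ (sum_rowCenter_mul_rowCenter_nonneg Θ hrows) v
  refine ⟨?_, fun i => |v i|, hu, fun i => abs_nonneg _, humax⟩
  trans √(∑ j, (∑ i, |v i| * rowCenter Θ i j) ^ 2)
  · refine IsGreatest.csSup_eq ⟨⟨_, hu, rfl⟩, ?_⟩
    rintro r ⟨x, hx, rfl⟩
    exact humax x hx
  · refine Eq.symm <| IsGreatest.csSup_eq ⟨⟨_, hu, fun i => abs_nonneg _, rfl⟩, ?_⟩
    rintro r ⟨x, hx, -, rfl⟩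
    exact humax x hx

/-- Lemma 6, reformulated: for `Θ` with nondecreasing rows and its
row-centered version `Θ'`, the supremum of `x ↦ ‖Θ'ᵀx‖₂` over the unit sphere equals
the supremum over nonnegative unit vectors; in particular some nonnegative unit vector
attains the maximum (a first left singular vector of `Θ'` can be chosen nonnegative). -/
theorem exists_nonneg_first_left_singular_vector {n p : ℕ} (hn : 0 < n) (hp : 0 < p)
    (Θ : Fin n → Fin p → ℝ) (hrows : ∀ i, Monotone (Θ i)) :
    (sSup {r : ℝ | ∃ x : Fin n → ℝ, ∑ i, x i ^ 2 = 1 ∧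
        r = Real.sqrt (∑ j, (∑ i, x i * rowCenter Θ i j) ^ 2)} =
      sSup {r : ℝ | ∃ x : Fin n → ℝ, (∑ i, x i ^ 2 = 1) ∧ (∀ i, 0 ≤ x i) ∧
        r = Real.sqrt (∑ j, (∑ i, x i * rowCenter Θ i j) ^ 2)}) ∧
    ∃ u : Fin n → ℝ, (∑ i, u i ^ 2 = 1) ∧ (∀ i, 0 ≤ u i) ∧
      ∀ x : Fin n → ℝ, ∑ i, x i ^ 2 = 1 →
        Real.sqrt (∑ j, (∑ i, x i * rowCenter Θ i j) ^ 2) ≤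
          Real.sqrt (∑ j, (∑ i, u i * rowCenter Θ i j) ^ 2) :=
  exists_nonneg_first_left_singular_vector_general hn Θ hrows
end

section
/- Monotone first right singular vector (Proposition 3, reformulated): let Θ ∈ ℝ^{n×p} have nondecreasing rows and let Θ' = Θ(I − p⁻¹ee^T) be the row-centered matrix, with Θ' ≠ 0. Then there exists a unit vector v ∈ ℝ^p with nondecreasing entries (v_1 ≤ v_2 ≤ … ≤ v_p) such that ‖Θ' v‖₂ = sup{‖Θ' u‖₂ : u ∈ ℝ^p, ‖u‖₂ = 1}; i.e., a first right singular vector of Θ' can be chosen monotone. -/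
open ContinuousLinearMap Metric Filter Matrix
open scoped InnerProductSpace InnerProduct

theorem nonpos_of_forall_pow_mul_le {a b x y : ℝ} (ha : 0 ≤ a) (hab : a < b)
    (h : ∀ k : ℕ, b ^ k * x ≤ a ^ k * y) : x ≤ 0 := by
  have hb : 0 < b := ha.trans_lt hab
  have hlim : Tendsto (fun k : ℕ => (a / b) ^ k * y) atTop (nhds 0) := by
    simpa using (tendsto_pow_atTop_nhds_zero_of_lt_one (div_nonneg ha hb.le)
      ((div_lt_one hb).2 hab)).mul_const y
  refine ge_of_tendsto' hlim fun k => ?_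
  rw [div_pow, div_mul_eq_mul_div, le_div_iff₀ (pow_pos hb k), mul_comm]
  exact h k

theorem norm_iterate_le_of_mapsTo {E : Type*} [SeminormedAddCommGroup E] {f : E → E} {K : Set E}
    {r : ℝ} (hr : 0 ≤ r) (hK : Set.MapsTo f K K) (hf : ∀ u ∈ K, ‖f u‖ ≤ r * ‖u‖) {c : E}
    (hc : c ∈ K) (k : ℕ) : ‖f^[k] c‖ ≤ r ^ k * ‖c‖ := by
  induction k with
  | zero => simp
  | succ k ih =>
    rw [Function.iterate_succ_apply', pow_succ', mul_assoc]
    exact (hf _ (hK.iterate k hc)).trans (mul_le_mul_of_nonneg_left ih hr)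

theorem LinearMap.IsSymmetric.inner_iterate_apply_of_apply_eq_smul {E : Type*}
    [SeminormedAddCommGroup E] [InnerProductSpace ℝ E] {T : E →ₗ[ℝ] E} (hT : T.IsSymmetric)
    {w : E} {β : ℝ} (hw : T w = β • w) (x : E) (k : ℕ) :
    ⟪T^[k] x, w⟫_ℝ = β ^ k * ⟪x, w⟫_ℝ := by
  induction k with
  | zero => simp
  | succ k ih =>
    rw [Function.iterate_succ_apply', hT, hw, real_inner_smul_right, ih, pow_succ', mul_assoc]

theorem exists_inner_ne_zero_of_span_eq_top {E : Type*} [NormedAddCommGroup E]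
    [InnerProductSpace ℝ E] {s : Set E} (hs : Submodule.span ℝ s = ⊤) {w : E} (hw : w ≠ 0) :
    ∃ c ∈ s, ⟪c, w⟫_ℝ ≠ 0 := by
  by_contra! h
  have hker : Submodule.span ℝ s ≤ LinearMap.ker (innerₛₗ ℝ w) := by
    rw [Submodule.span_le]
    intro c hc
    simpa [real_inner_comm] using h c hc
  rw [hs, top_le_iff, LinearMap.ker_eq_top] at hker
  simpa [hw] using LinearMap.congr_fun hker w

theorem PointedCone.norm_apply_le_of_forall_norm_eq_one {E F : Type*} [NormedAddCommGroup E]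
    [NormedSpace ℝ E] [SeminormedAddCommGroup F] [NormedSpace ℝ F] {K : PointedCone ℝ E}
    (A : E →L[ℝ] F) {C : ℝ} (h : ∀ u ∈ K, ‖u‖ = 1 → ‖A u‖ ≤ C) {u : E} (hu : u ∈ K) :
    ‖A u‖ ≤ C * ‖u‖ := by
  rcases eq_or_ne u 0 with rfl | hu0
  · simp
  have hpos : 0 < ‖u‖ := norm_pos_iff.2 hu0
  have hunit := h (‖u‖⁻¹ • u) (K.smul_mem (inv_nonneg.2 hpos.le) hu)
    (by rw [norm_smul, norm_inv, norm_norm, inv_mul_cancel₀ hpos.ne'])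
  rw [map_smul, norm_smul, norm_inv, norm_norm, inv_mul_le_iff₀ hpos] at hunit
  linarith

section Adjoint

variable {E F : Type*} [NormedAddCommGroup E] [InnerProductSpace ℝ E] [NormedAddCommGroup F]
  [InnerProductSpace ℝ F] [CompleteSpace E] [CompleteSpace F]

theorem ContinuousLinearMap.norm_adjoint_comp_self_apply_le (A : E →L[ℝ] F) {u : E} {a : ℝ}
    (hu : ‖A u‖ ≤ a * ‖u‖) : ‖(A† ∘L A) u‖ ≤ a * ‖A‖ * ‖u‖ := by
  set x := (A† ∘L A) u
  have hsq : ‖x‖ * ‖x‖ ≤ (a * ‖A‖ * ‖u‖) * ‖x‖ := calc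
    ‖x‖ * ‖x‖ = ⟪A u, A x⟫_ℝ := by
      rw [← real_inner_self_eq_norm_mul_norm]
      exact adjoint_inner_left A x (A u)
    _ ≤ ‖A u‖ * ‖A x‖ := real_inner_le_norm _ _
    _ ≤ (a * ‖u‖) * (‖A‖ * ‖x‖) :=
      mul_le_mul hu (A.le_opNorm x) (norm_nonneg _) ((norm_nonneg _).trans hu)
    _ = (a * ‖A‖ * ‖u‖) * ‖x‖ := by ring
  rcases (norm_nonneg x).eq_or_lt with hx | hx
  · rw [← hx, mul_right_comm]
    exact mul_nonneg ((norm_nonneg _).trans hu) (norm_nonneg _)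
  · exact le_of_mul_le_mul_right hsq hx

theorem ContinuousLinearMap.adjoint_comp_self_apply_of_isMaxOn (A : E →L[ℝ] F) {w : E}
    (hw : ‖w‖ = 1) (hmax : IsMaxOn (fun u => ‖A u‖) (sphere 0 1) w) :
    (A† ∘L A) w = ‖A w‖ ^ 2 • w := by
  have hform : ∀ u, (A† ∘L A).reApplyInnerSelf u = ‖A u‖ ^ 2 := fun u => by
    rw [reApplyInnerSelf_apply, comp_apply, adjoint_inner_left, real_inner_self_eq_norm_sq]
    rfl
  have hmax' : IsMaxOn (A† ∘L A).reApplyInnerSelf (sphere 0 ‖w‖) w := by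
    rw [hw]
    intro u hu
    show (A† ∘L A).reApplyInnerSelf u ≤ (A† ∘L A).reApplyInnerSelf w
    rw [hform, hform]
    exact pow_le_pow_left₀ (norm_nonneg _) (hmax hu) 2
  rw [(isPositive_adjoint_comp_self A).isSelfAdjoint.eq_smul_self_of_isLocalExtrOn_real
    (Or.inr hmax'.localize), rayleighQuotient, hform, hw, one_pow, div_one]

end Adjoint

section FiniteDimensional

variable {E F : Type*} [NormedAddCommGroup E] [InnerProductSpace ℝ E] [NormedAddCommGroup F]
  [InnerProductSpace ℝ F] [FiniteDimensional ℝ E] [Nontrivial E] [CompleteSpace F]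

theorem ContinuousLinearMap.opNorm_le_of_mapsTo_adjoint_comp_self (A : E →L[ℝ] F)
    {K : PointedCone ℝ E} (hspan : Submodule.span ℝ (K : Set E) = ⊤)
    (hK : Set.MapsTo (A† ∘L A) K K) {a : ℝ} (ha : ∀ u ∈ K, ‖A u‖ ≤ a * ‖u‖) : ‖A‖ ≤ a := by
  obtain ⟨w, hw, hwmax⟩ := (isCompact_sphere (0 : E) 1).exists_isMaxOn
    (NormedSpace.sphere_nonempty.2 zero_le_one) A.continuous.norm.continuousOn
  rw [mem_sphere_zero_iff_norm] at hw
  set b := ‖A w‖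
  have hAb : ‖A‖ = b := le_antisymm
    (opNorm_le_of_unit_norm (norm_nonneg _) fun u hu => hwmax (mem_sphere_zero_iff_norm.2 hu))
    (by simpa [hw] using A.le_opNorm w)
  obtain ⟨c, hcK, hcw⟩ := exists_inner_ne_zero_of_span_eq_top hspan
    (norm_ne_zero_iff.1 (hw.symm ▸ one_ne_zero))
  have hc : 0 < ‖c‖ := norm_pos_iff.2 fun h => hcw (by simp [h])
  have ha0 : 0 ≤ a := (mul_nonneg_iff_of_pos_right hc).1 ((norm_nonneg _).trans (ha c hcK))
  rw [hAb]
  by_contra! hab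
  have hb : 0 < b := ha0.trans_lt hab
  have hT : ∀ u ∈ K, ‖(A† ∘L A) u‖ ≤ a * b * ‖u‖ := fun u hu =>
    hAb ▸ A.norm_adjoint_comp_self_apply_le (ha u hu)
  have hsymm := (isPositive_adjoint_comp_self A).isSelfAdjoint.isSymmetric
  have hgrowth (k : ℕ) : (b * b) ^ k * |⟪c, w⟫_ℝ| ≤ (a * b) ^ k * ‖c‖ := calc
    (b * b) ^ k * |⟪c, w⟫_ℝ| = |⟪(A† ∘L A)^[k] c, w⟫_ℝ| := by
      rw [← coe_coe, hsymm.inner_iterate_apply_of_apply_eq_smul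
        (A.adjoint_comp_self_apply_of_isMaxOn hw hwmax), abs_mul, abs_pow, sq, abs_mul_self]
    _ ≤ ‖(A† ∘L A)^[k] c‖ := by simpa [hw] using abs_real_inner_le_norm ((A† ∘L A)^[k] c) w
    _ ≤ (a * b) ^ k * ‖c‖ := norm_iterate_le_of_mapsTo (mul_nonneg ha0 hb.le) hK hT hcK k
  exact hcw (abs_nonpos_iff.1 (nonpos_of_forall_pow_mul_le (mul_nonneg ha0 hb.le)
    (mul_lt_mul_of_pos_right hab hb) hgrowth))

theorem ContinuousLinearMap.exists_mem_isMaxOn_norm_of_mapsTo_adjoint_comp_self (A : E →L[ℝ] F)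
    {K : PointedCone ℝ E} (hclosed : IsClosed (K : Set E))
    (hspan : Submodule.span ℝ (K : Set E) = ⊤) (hK : Set.MapsTo (A† ∘L A) K K) :
    ∃ v ∈ K, ‖v‖ = 1 ∧ IsMaxOn (fun u => ‖A u‖) (sphere 0 1) v := by
  obtain ⟨w, hw⟩ := exists_ne (0 : E)
  obtain ⟨c, hcK, hcw⟩ := exists_inner_ne_zero_of_span_eq_top hspan hw
  have hc : 0 < ‖c‖ := norm_pos_iff.2 fun h => hcw (by simp [h])
  have hne : ((K : Set E) ∩ sphere 0 1).Nonempty := ⟨‖c‖⁻¹ • c, K.smul_mem (by positivity) hcK,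
    by rw [mem_sphere_zero_iff_norm, norm_smul, norm_inv, norm_norm, inv_mul_cancel₀ hc.ne']⟩
  obtain ⟨v, ⟨hvK, hv⟩, hvmax⟩ := ((isCompact_sphere 0 1).inter_left hclosed).exists_isMaxOn hne
    A.continuous.norm.continuousOn
  rw [mem_sphere_zero_iff_norm] at hv
  have hA : ‖A‖ ≤ ‖A v‖ := A.opNorm_le_of_mapsTo_adjoint_comp_self hspan hK fun u hu =>
    K.norm_apply_le_of_forall_norm_eq_one A
      (fun x hx hx1 => hvmax ⟨hx, mem_sphere_zero_iff_norm.2 hx1⟩) hu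
  refine ⟨v, hvK, hv, fun u hu => ?_⟩
  exact (A.le_opNorm u).trans (by rwa [mem_sphere_zero_iff_norm.1 hu, mul_one])

end FiniteDimensional

section MonotoneCone

theorem IsUpperSet.monotone_indicator_one {ι : Type*} [Preorder ι] {s : Set ι}
    (hs : IsUpperSet s) : Monotone (s.indicator (1 : ι → ℝ)) := by
  intro a b hab
  by_cases ha : a ∈ s
  · simp [ha, hs hab ha]
  · simp only [Set.indicator_of_notMem ha]
    exact Set.indicator_nonneg (fun _ _ => zero_le_one) b

theorem sum_mul_nonneg_of_monotone_of_sum_eq_zero {ι : Type*} [LinearOrder ι] [Fintype ι]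
    {f g : ι → ℝ} (hf : Monotone f) (hg : Monotone g) (hf0 : ∑ i, f i = 0) :
    0 ≤ ∑ i, f i * g i := by
  cases isEmpty_or_nonempty ι
  · simp
  have hcheb := (hf.monovary hg).sum_mul_sum_le_card_mul_sum
  rw [hf0, zero_mul] at hcheb
  exact nonneg_of_mul_nonneg_right hcheb (by exact_mod_cast Fintype.card_pos)

variable (ι : Type*)

def monotoneCone [Preorder ι] : PointedCone ℝ (EuclideanSpace ℝ ι) where
  carrier := {u | Monotone u}
  add_mem' hu hv := hu.add hv
  zero_mem' := monotone_const
  smul_mem' c _ hu := hu.const_mul c.2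

variable {ι}

theorem isClosed_monotoneCone [Preorder ι] :
    IsClosed (monotoneCone ι : Set (EuclideanSpace ℝ ι)) :=
  isClosed_monotone.preimage (PiLp.continuous_ofLp 2 _)

theorem span_monotoneCone [Fintype ι] [PartialOrder ι] :
    Submodule.span ℝ (monotoneCone ι : Set (EuclideanSpace ℝ ι)) = ⊤ := by
  classical
  rw [eq_top_iff, ← (EuclideanSpace.basisFun ι ℝ).toBasis.span_eq, Submodule.span_le]
  rintro _ ⟨j, rfl⟩
  have hsingle : (EuclideanSpace.basisFun ι ℝ).toBasis j =
      WithLp.toLp 2 ((Set.Ici j).indicator 1) - WithLp.toLp 2 ((Set.Ioi j).indicator 1) := by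
    ext k
    by_cases hk : k = j
    · subst hk; simp
    · simp [Set.indicator, hk, lt_iff_le_and_ne, Ne.symm hk]
  rw [hsingle]
  exact Submodule.sub_mem _ (Submodule.subset_span (isUpperSet_Ici j).monotone_indicator_one)
    (Submodule.subset_span (isUpperSet_Ioi j).monotone_indicator_one)

theorem EuclideanSpace.real_norm_eq [Fintype ι] (x : EuclideanSpace ℝ ι) :
    ‖x‖ = √(∑ i, x i ^ 2) := by
  rw [← real_norm_sq_eq, Real.sqrt_sq (norm_nonneg _)]

theorem Matrix.adjoint_comp_self_toEuclideanLin_apply {κ : Type*} [Fintype ι] [DecidableEq ι]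
    [Fintype κ] (B : Matrix κ ι ℝ) (u : EuclideanSpace ℝ ι) :
    ((toEuclideanLin B).toContinuousLinearMap† ∘L (toEuclideanLin B).toContinuousLinearMap) u =
      WithLp.toLp 2 ((B *ᵥ WithLp.ofLp u) ᵥ* B) := by
  classical
  rw [ContinuousLinearMap.comp_apply, ← LinearMap.adjoint_toContinuousLinearMap,
    ← toEuclideanLin_conjTranspose_eq_adjoint, conjTranspose_eq_transpose_of_trivial]
  simp only [LinearMap.coe_toContinuousLinearMap', toLpLin_apply, mulVec_transpose]

theorem Matrix.mapsTo_monotoneCone_adjoint_comp_self {κ : Type*} [Fintype ι] [LinearOrder ι]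
    [Fintype κ] {B : Matrix κ ι ℝ} (hmono : ∀ i, Monotone (B i)) (hsum : ∀ i, ∑ j, B i j = 0) :
    Set.MapsTo
      ((toEuclideanLin B).toContinuousLinearMap† ∘L (toEuclideanLin B).toContinuousLinearMap)
      (monotoneCone ι) (monotoneCone ι) := by
  intro u hu j k hjk
  have hBu : ∀ i, 0 ≤ (B *ᵥ WithLp.ofLp u) i := fun i =>
    sum_mul_nonneg_of_monotone_of_sum_eq_zero (hmono i) hu (hsum i)
  rw [adjoint_comp_self_toEuclideanLin_apply]
  exact Finset.sum_le_sum fun i _ => mul_le_mul_of_nonneg_left (hmono i hjk) (hBu i)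

end MonotoneCone

theorem sum_rowCenter {n p : ℕ} (Θ : Fin n → Fin p → ℝ) (i : Fin n) :
    ∑ j, rowCenter Θ i j = 0 := by
  rcases Nat.eq_zero_or_pos p with rfl | hp
  · simp
  simp only [rowCenter, Finset.sum_sub_distrib, Finset.sum_const, Finset.card_univ,
    Fintype.card_fin, nsmul_eq_mul]
  field_simp
  ring

theorem monotone_rowCenter {n p : ℕ} {Θ : Fin n → Fin p → ℝ} {i : Fin n} (h : Monotone (Θ i)) :
    Monotone (rowCenter Θ i) :=
  fun _ _ hjk => sub_le_sub_right (h hjk) _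

theorem exists_monotone_first_right_singular_vector_general {n p : ℕ} (hp : 0 < p)
    (Θ : Fin n → Fin p → ℝ) (hrows : ∀ i, Monotone (Θ i)) :
    ∃ v : Fin p → ℝ, (∑ j, v j ^ 2 = 1) ∧ Monotone v ∧
      ∀ u : Fin p → ℝ, ∑ j, u j ^ 2 = 1 →
        Real.sqrt (∑ i, (∑ j, rowCenter Θ i j * u j) ^ 2) ≤
          Real.sqrt (∑ i, (∑ j, rowCenter Θ i j * v j) ^ 2) := by
  have : Nonempty (Fin p) := ⟨⟨0, hp⟩⟩
  set A := (toEuclideanLin (rowCenter Θ)).toContinuousLinearMap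
  have hA (u : Fin p → ℝ) :
      ‖A (WithLp.toLp 2 u)‖ = √(∑ i, (∑ j, rowCenter Θ i j * u j) ^ 2) := by
    rw [EuclideanSpace.real_norm_eq]
    rfl
  obtain ⟨v, hvK, hv, hvmax⟩ := A.exists_mem_isMaxOn_norm_of_mapsTo_adjoint_comp_self
    isClosed_monotoneCone span_monotoneCone
    (mapsTo_monotoneCone_adjoint_comp_self (fun i => monotone_rowCenter (hrows i))
      (sum_rowCenter Θ))
  refine ⟨v, ?_, hvK, fun u hu => ?_⟩
  · rw [← EuclideanSpace.real_norm_sq_eq, hv, one_pow]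
  · rw [← hA, ← hA, WithLp.toLp_ofLp]
    refine hvmax ?_
    rw [mem_sphere_zero_iff_norm, EuclideanSpace.real_norm_eq]
    simpa using hu

/-- Proposition 3, reformulated: if `Θ` has nondecreasing rows and its
row-centered version `Θ'` is nonzero, then a first right singular vector of `Θ'` can be
chosen monotone: there is a unit vector `v` with nondecreasing entries maximizing
`u ↦ ‖Θ'u‖₂` over the unit sphere of `ℝ^p`. -/
theorem exists_monotone_first_right_singular_vector {n p : ℕ} (hp : 0 < p)
    (Θ : Fin n → Fin p → ℝ) (hrows : ∀ i, Monotone (Θ i))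
    (hne : rowCenter Θ ≠ 0) :
    ∃ v : Fin p → ℝ, (∑ j, v j ^ 2 = 1) ∧ Monotone v ∧
      ∀ u : Fin p → ℝ, ∑ j, u j ^ 2 = 1 →
        Real.sqrt (∑ i, (∑ j, rowCenter Θ i j * u j) ^ 2) ≤
          Real.sqrt (∑ i, (∑ j, rowCenter Θ i j * v j) ^ 2) :=
  exists_monotone_first_right_singular_vector_general hp Θ hrows
end

section
/- Gap preservation in the singular vector (Proposition 4): let Θ' ∈ ℝ^{n×p} have nondecreasing rows, each with nonzero Euclidean norm ‖Θ'_{k·}‖₂ > 0. Suppose v ∈ ℝ^p is a unit vector and λ > 0 are such that Θ'^T Θ' v = λ² v and all entries of the vector Θ' v ∈ ℝ^n have the same sign (all ≥ 0 or all ≤ 0). If δ > 0 and indices i < j satisfy |θ'_{k,i} − θ'_{k,j}| ≥ δ ‖Θ'_{k·}‖₂ for every row k, then |v_i − v_j| ≥ δ. -/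
/-!
Write `u = Θ'v`. Then `Θ'ᵀu = λ²v` and `‖u‖² = λ²`. If `u ≥ 0`, each entry satisfies
`u_k ≤ ‖Θ'_{k·}‖₂` by Cauchy–Schwarz, so
`λ²(v_j − v_i) = ∑_k (θ'_{k,j} − θ'_{k,i}) u_k ≥ δ ∑_k ‖Θ'_{k·}‖₂ u_k ≥ δ ∑_k u_k² = δλ²`.
The case `u ≤ 0` follows by replacing `v` with `-v`.
-/

open Matrix

namespace Matrix

variable {m ι : Type*} [Fintype ι]

theorem mulVec_apply_le_sqrt_sum_sq (A : Matrix m ι ℝ) {v : ι → ℝ} (hv : v ⬝ᵥ v = 1) (k : m) :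
    (A *ᵥ v) k ≤ √(∑ j, A k j ^ 2) := by
  have hv' : ∑ j, v j ^ 2 = 1 := by simpa only [dotProduct, sq] using hv
  have h := Real.sum_mul_le_sqrt_mul_sqrt Finset.univ (A k) v
  rw [hv', Real.sqrt_one, mul_one] at h
  exact h

variable [Fintype m]

theorem mulVec_dotProduct_mulVec_of_transpose_mul_mulVec_eq_smul {A : Matrix m ι ℝ} {v : ι → ℝ}
    {c : ℝ} (h : (Aᵀ * A) *ᵥ v = c • v) : (A *ᵥ v) ⬝ᵥ (A *ᵥ v) = c * (v ⬝ᵥ v) := by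
  rw [dotProduct_mulVec, ← mulVec_transpose, mulVec_mulVec, h, dotProduct_comm, dotProduct_smul,
    smul_eq_mul]

theorem le_sub_of_transpose_mul_mulVec_eq_smul_of_nonneg {A : Matrix m ι ℝ} {v : ι → ℝ} {c : ℝ}
    (heig : (Aᵀ * A) *ᵥ v = c • v) (hc : 0 < c) (hv : v ⬝ᵥ v = 1) (hAv : 0 ≤ A *ᵥ v)
    {δ : ℝ} (hδ : 0 ≤ δ) {i j : ι} (hgap : ∀ k, δ * √(∑ j', A k j' ^ 2) ≤ A k j - A k i) :
    δ ≤ v j - v i := by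
  set u := A *ᵥ v
  have hu : u ⬝ᵥ u = c := by
    rw [mulVec_dotProduct_mulVec_of_transpose_mul_mulVec_eq_smul heig, hv, mul_one]
  have hcol (l : ι) : c * v l = ∑ k, A k l * u k := by
    rw [← smul_eq_mul, ← Pi.smul_apply, ← heig, ← mulVec_mulVec, mulVec_transpose, vecMul,
      dotProduct]
    simp only [u, mul_comm]
  refine le_of_mul_le_mul_right ?_ hc
  calc δ * c = ∑ k, δ * (u k * u k) := by rw [← hu, dotProduct, Finset.mul_sum]
    _ ≤ ∑ k, δ * √(∑ j', A k j' ^ 2) * u k := Finset.sum_le_sum fun k _ => by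
      rw [← mul_assoc]
      exact mul_le_mul_of_nonneg_right
        (mul_le_mul_of_nonneg_left (mulVec_apply_le_sqrt_sum_sq A hv k) hδ) (hAv k)
    _ ≤ ∑ k, (A k j - A k i) * u k := by
      gcongr with k
      exacts [hAv k, hgap k]
    _ = (v j - v i) * c := by
      rw [sub_mul, mul_comm (v j), mul_comm (v i), hcol, hcol, ← Finset.sum_sub_distrib]
      simp only [sub_mul]

theorem le_sub_of_transpose_mul_mulVec_eq_smul_of_nonpos {A : Matrix m ι ℝ} {v : ι → ℝ} {c : ℝ}
    (heig : (Aᵀ * A) *ᵥ v = c • v) (hc : 0 < c) (hv : v ⬝ᵥ v = 1) (hAv : A *ᵥ v ≤ 0)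
    {δ : ℝ} (hδ : 0 ≤ δ) {i j : ι} (hgap : ∀ k, δ * √(∑ j', A k j' ^ 2) ≤ A k j - A k i) :
    δ ≤ v i - v j := by
  have h := le_sub_of_transpose_mul_mulVec_eq_smul_of_nonneg (v := -v)
    (by rw [mulVec_neg, heig, smul_neg]) hc (by rwa [neg_dotProduct_neg])
    (by rwa [mulVec_neg, neg_nonneg]) hδ hgap
  rwa [Pi.neg_apply, Pi.neg_apply, neg_sub_neg] at h

end Matrix

theorem singular_vector_gap_preservation_general {n p : ℕ}
    (Θ' : Fin n → Fin p → ℝ) (hrows : ∀ k, Monotone (Θ' k))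
    (v : Fin p → ℝ) (hv : ∑ j', v j' ^ 2 = 1) (lam : ℝ) (hlam : 0 < lam)
    (heig : ∀ j', ∑ j'', (∑ i', Θ' i' j' * Θ' i' j'') * v j'' = lam ^ 2 * v j')
    (hsign : (∀ i', 0 ≤ ∑ j', Θ' i' j' * v j') ∨ (∀ i', ∑ j', Θ' i' j' * v j' ≤ 0))
    (δ : ℝ) (hδ : 0 < δ) (i j : Fin p) (hij : i < j)
    (hgap : ∀ k, δ * Real.sqrt (∑ j', (Θ' k j') ^ 2) ≤ |Θ' k i - Θ' k j|) :
    δ ≤ |v i - v j| := by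
  have heig' : ((of Θ')ᵀ * of Θ') *ᵥ v = lam ^ 2 • v := funext heig
  have hv' : v ⬝ᵥ v = 1 := by simpa only [dotProduct, sq] using hv
  have hgap' (k : Fin n) : δ * √(∑ j', Θ' k j' ^ 2) ≤ Θ' k j - Θ' k i := by
    rw [← abs_of_nonneg (sub_nonneg.mpr (hrows k hij.le)), abs_sub_comm]
    exact hgap k
  rcases hsign with hpos | hneg
  · calc δ ≤ v j - v i := le_sub_of_transpose_mul_mulVec_eq_smul_of_nonneg heig' (by positivity)
          hv' hpos hδ.le hgap'
      _ ≤ |v i - v j| := abs_sub_comm (v i) (v j) ▸ le_abs_self _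
  · exact (le_sub_of_transpose_mul_mulVec_eq_smul_of_nonpos heig' (by positivity) hv' hneg hδ.le
      hgap').trans (le_abs_self _)

/-- Proposition 4: let `Θ'` have nondecreasing rows, each of positive
Euclidean norm.  If `v` is a unit eigenvector of `Θ'ᵀΘ'` with eigenvalue `λ² > 0` such that
all entries of `Θ'v` have the same sign, and if `|θ'_{k,i} − θ'_{k,j}| ≥ δ‖Θ'_{k·}‖₂` for
every row `k` (for some fixed `i < j` and `δ > 0`), then `|v_i − v_j| ≥ δ`. -/
theorem singular_vector_gap_preservation {n p : ℕ}
    (Θ' : Fin n → Fin p → ℝ) (hrows : ∀ k, Monotone (Θ' k))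
    (hrownorm : ∀ k, 0 < Real.sqrt (∑ j', (Θ' k j') ^ 2))
    (v : Fin p → ℝ) (hv : ∑ j', v j' ^ 2 = 1) (lam : ℝ) (hlam : 0 < lam)
    (heig : ∀ j', ∑ j'', (∑ i', Θ' i' j' * Θ' i' j'') * v j'' = lam ^ 2 * v j')
    (hsign : (∀ i', 0 ≤ ∑ j', Θ' i' j' * v j') ∨ (∀ i', ∑ j', Θ' i' j' * v j' ≤ 0))
    (δ : ℝ) (hδ : 0 < δ) (i j : Fin p) (hij : i < j)
    (hgap : ∀ k, δ * Real.sqrt (∑ j', (Θ' k j') ^ 2) ≤ |Θ' k i - Θ' k j|) :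
    δ ≤ |v i - v j| :=
  singular_vector_gap_preservation_general Θ' hrows v hv lam hlam heig hsign δ hδ i j hij hgap
end
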